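/- Let X be uniform Bernoulli(1/2), Y its erasure with erasure probability p, and W a {0,1}-valued random variable with conditional distribution: P(W=0|X=0,Y=0)=1−β, P(W=0|X=1,Y=1)=β, P(W=0|X=0,Y=E)=1−α, P(W=0|X=1,Y=E)=α, where α,β ∈ [0,1/2]. Then I(X,Y;W) = 1 − (1−p)h(β) − p·h(α), H(Y|W) = h(p) + (1−p)h(β), and P(X ≠ W) = (1−p)β + pα. -/

import Mathlib

open Finset Real
open scoped Classical

noncomputable section

/-- Probability of an event under a finite probability mass function. -/
def pr {Ω : Type} [Fintype Ω] (P : Ω → ℝ) (A : Ω → Prop) : ℝ :=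
  ∑ ω, if A ω then P ω else 0

/-- `P` is a probability mass function on the finite type `Ω`. -/
def IsPMF {Ω : Type} [Fintype Ω] (P : Ω → ℝ) : Prop :=
  (∀ ω, 0 ≤ P ω) ∧ ∑ ω, P ω = 1

/-- `-t log₂ t` (with the convention `0 log 0 = 0`). -/
def nlog (t : ℝ) : ℝ := - (t * Real.logb 2 t)

/-- Shannon entropy (base 2) of a random variable `X` on `(Ω, P)`. -/
def ent {Ω α : Type} [Fintype Ω] [Fintype α] (P : Ω → ℝ) (X : Ω → α) : ℝ :=
  ∑ x, nlog (pr P (fun ω => X ω = x))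

/-- Conditional Shannon entropy `H(X|Y) = H(X,Y) - H(Y)`. -/
def condEnt {Ω α β : Type} [Fintype Ω] [Fintype α] [Fintype β]
    (P : Ω → ℝ) (X : Ω → α) (Y : Ω → β) : ℝ :=
  ent P (fun ω => (X ω, Y ω)) - ent P Y

/-- Mutual information `I(X;Y) = H(X) - H(X|Y)`. -/
def mi {Ω α β : Type} [Fintype Ω] [Fintype α] [Fintype β]
    (P : Ω → ℝ) (X : Ω → α) (Y : Ω → β) : ℝ :=
  ent P X - condEnt P X Y

/-- Conditional mutual information `I(X;Y|Z) = H(X|Z) - H(X|Y,Z)`. -/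
def condMI {Ω α β γ : Type} [Fintype Ω] [Fintype α] [Fintype β] [Fintype γ]
    (P : Ω → ℝ) (X : Ω → α) (Y : Ω → β) (Z : Ω → γ) : ℝ :=
  condEnt P X Z - condEnt P X (fun ω => (Y ω, Z ω))

/-- Binary entropy function. -/
def binEnt (a : ℝ) : ℝ := nlog a + nlog (1 - a)

/-! The hypotheses determine the joint law of `((X, Y), W)`: `(X, Y)` is a uniform bit seen
through an erasure channel, and `W` is `X` flipped with probability `β`, or `α` after an erasure.
Every quantity is then an explicit finite sum of atoms, and `nlog (a * b) = a * nlog b + b * nlog a`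
splits each atom's contribution into the binary entropies of `p`, `α` and `β`; `W` is uniform, so
`H(W) = 1`. -/

section Probability

variable {Ω : Type} [Fintype Ω] (P : Ω → ℝ)

lemma pr_congr {A B : Ω → Prop} (h : ∀ ω, A ω ↔ B ω) : pr P A = pr P B := by
  simp only [pr, h]

lemma pr_eq_zero_of_forall_not {A : Ω → Prop} (h : ∀ ω, ¬ A ω) : pr P A = 0 :=
  Finset.sum_eq_zero fun ω _ => if_neg (h ω)

lemma pr_and_add_pr_and_not (A B : Ω → Prop) :
    pr P (fun ω => A ω ∧ B ω) + pr P (fun ω => A ω ∧ ¬ B ω) = pr P A := by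
  simp only [pr, ← Finset.sum_add_distrib]
  refine Finset.sum_congr rfl fun ω _ => ?_
  by_cases hA : A ω <;> by_cases hB : B ω <;> simp [hA, hB]

lemma pr_comp_eq_sum {γ : Type} [Fintype γ] (Z : Ω → γ) (B : γ → Prop) :
    pr P (fun ω => B (Z ω)) = ∑ z, if B z then pr P (fun ω => Z ω = z) else 0 := by
  have (z : γ) : (if B z then pr P (fun ω => Z ω = z) else 0)
      = ∑ ω, if Z ω = z then (if B z then P ω else 0) else 0 := by
    split_ifs <;> simp [pr]
  simp only [this]
  rw [Finset.sum_comm]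
  simp [pr]

end Probability

lemma nlog_zero : nlog 0 = 0 := by simp [nlog]

-- No sign condition: `Real.logb` sees only `|x|`, and `nlog` vanishes at `0`.
lemma nlog_mul (a b : ℝ) : nlog (a * b) = a * nlog b + b * nlog a := by
  rcases eq_or_ne a 0 with rfl | ha
  · simp [nlog]
  rcases eq_or_ne b 0 with rfl | hb
  · simp [nlog]
  simp only [nlog, Real.logb_mul ha hb]
  ring

lemma nlog_half : nlog (1 / 2) = 1 / 2 := by
  simp [nlog, Real.logb_inv]

lemma nlog_div_two (x : ℝ) : nlog (x / 2) = x / 2 + nlog x / 2 := by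
  rw [div_eq_mul_one_div, nlog_mul, nlog_half]
  ring

lemma ent_comp_eq_sum_nlog {Ω τ γ : Type} [Fintype Ω] [Fintype τ] [Fintype γ] {P : Ω → ℝ}
    {T : Ω → τ} {q : τ → ℝ} (hT : ∀ t, pr P (fun ω => T ω = t) = q t) (f : τ → γ) :
    ent P (fun ω => f (T ω)) = ∑ c, nlog (∑ t, if f t = c then q t else 0) := by
  unfold ent
  congr! 2 with c
  rw [pr_comp_eq_sum P T (fun t => f t = c)]
  simp only [hT]

def erasureLaw (p : ℝ) : Bool × Option Bool → ℝ
  | (x, some y) => if x = y then (1 - p) / 2 else 0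
  | (_, none) => p / 2

def flipChannel (α β : ℝ) : Bool × Option Bool → Bool → ℝ
  | (x, some _), w => if w = x then 1 - β else β
  | (x, none), w => if w = x then 1 - α else α

lemma flipChannel_false_add_true (α β : ℝ) (xy : Bool × Option Bool) :
    flipChannel α β xy false + flipChannel α β xy true = 1 := by
  rcases xy with ⟨_ | _, _ | _⟩ <;> simp [flipChannel]

section ErasureFlip

variable {Ω : Type} [Fintype Ω] {P : Ω → ℝ} {X W : Ω → Bool} {Y : Ω → Option Bool} {p α β : ℝ}

lemma pr_eq_erasureLaw (hX : ∀ b, pr P (fun ω => X ω = b) = 1/2)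
    (hstruct : ∀ ω, Y ω = some (X ω) ∨ Y ω = none)
    (hindE : ∀ b, pr P (fun ω => Y ω = none ∧ X ω = b) = p * pr P (fun ω => X ω = b))
    (xy : Bool × Option Bool) :
    pr P (fun ω => (X ω, Y ω) = xy) = erasureLaw p xy := by
  have hErased (x : Bool) : pr P (fun ω => X ω = x ∧ Y ω = none) = p / 2 := by
    rw [pr_congr P fun ω => and_comm, hindE, hX]
    ring
  obtain ⟨x, _ | y⟩ := xy
  · simpa only [Prod.mk.injEq, erasureLaw] using hErased x
  simp only [Prod.mk.injEq, erasureLaw]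
  split_ifs with hxy
  · subst hxy
    have hUnerased : pr P (fun ω => X ω = x ∧ ¬ Y ω = none)
        = pr P (fun ω => X ω = x ∧ Y ω = some x) :=
      pr_congr P fun ω => by rcases hstruct ω with h | h <;> simp_all
    have := pr_and_add_pr_and_not P (fun ω => X ω = x) (fun ω => Y ω = none)
    rw [hErased, hUnerased, hX] at this
    linarith
  · exact pr_eq_zero_of_forall_not P fun ω ⟨hx, hy⟩ => by
      rcases hstruct ω with h | h <;> simp_all

lemma pr_eq_erasureLaw_mul_flipChannel (hX : ∀ b, pr P (fun ω => X ω = b) = 1/2)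
    (hstruct : ∀ ω, Y ω = some (X ω) ∨ Y ω = none)
    (hindE : ∀ b, pr P (fun ω => Y ω = none ∧ X ω = b) = p * pr P (fun ω => X ω = b))
    (hc00 : pr P (fun ω => W ω = false ∧ X ω = false ∧ Y ω = some false)
      = (1 - β) * pr P (fun ω => X ω = false ∧ Y ω = some false))
    (hc11 : pr P (fun ω => W ω = false ∧ X ω = true ∧ Y ω = some true)
      = β * pr P (fun ω => X ω = true ∧ Y ω = some true))
    (hc0E : pr P (fun ω => W ω = false ∧ X ω = false ∧ Y ω = none)
      = (1 - α) * pr P (fun ω => X ω = false ∧ Y ω = none))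
    (hc1E : pr P (fun ω => W ω = false ∧ X ω = true ∧ Y ω = none)
      = α * pr P (fun ω => X ω = true ∧ Y ω = none))
    (t : (Bool × Option Bool) × Bool) :
    pr P (fun ω => ((X ω, Y ω), W ω) = t) = erasureLaw p t.1 * flipChannel α β t.1 t.2 := by
  have hXY := pr_eq_erasureLaw hX hstruct hindE
  have hXY' (x : Bool) (y : Option Bool) :
      pr P (fun ω => X ω = x ∧ Y ω = y) = erasureLaw p (x, y) := by
    simpa only [Prod.mk.injEq] using hXY (x, y)
  have hFalse (xy : Bool × Option Bool) :
      pr P (fun ω => (X ω, Y ω) = xy ∧ W ω = false) = erasureLaw p xy * flipChannel α β xy false := by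
    rw [pr_congr P fun ω => and_comm]
    obtain ⟨_ | _, _ | _ | _⟩ := xy <;>
      simp only [Prod.mk.injEq, hc00, hc11, hc0E, hc1E, hXY', erasureLaw, flipChannel, if_true,
        if_false, Bool.false_eq_true, Bool.true_eq_false, zero_mul]
    all_goals first
      | exact pr_eq_zero_of_forall_not P fun ω h => by rcases hstruct ω with h' | h' <;> simp_all
      | ring
  obtain ⟨xy, _ | _⟩ := t
  · simpa only [Prod.mk.injEq] using hFalse xy
  · have := pr_and_add_pr_and_not P (fun ω => (X ω, Y ω) = xy) (fun ω => W ω = false)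
    simp only [hFalse, hXY, Bool.not_eq_false] at this
    simp only [Prod.mk.injEq]
    linear_combination this - erasureLaw p xy * flipChannel_false_add_true α β xy

lemma pr_eq_half_of_pr_eq_erasureLaw_mul_flipChannel
    (hlaw : ∀ t, pr P (fun ω => ((X ω, Y ω), W ω) = t) = erasureLaw p t.1 * flipChannel α β t.1 t.2)
    (w : Bool) : pr P (fun ω => W ω = w) = 1 / 2 := by
  refine (pr_comp_eq_sum P (fun ω => ((X ω, Y ω), W ω)) (fun t => t.2 = w)).trans ?_
  cases w <;> simp only [hlaw, Fintype.sum_prod_type, Fintype.sum_option, Fintype.sum_bool,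
    erasureLaw, flipChannel, Bool.false_eq_true, Bool.true_eq_false, if_true, if_false, zero_mul,
    add_zero, zero_add] <;> ring

end ErasureFlip

theorem stmt13_general {Ω : Type} [Fintype Ω] (P : Ω → ℝ)
    (X W : Ω → Bool) (Y : Ω → Option Bool)
    (p α β : ℝ)
    (hX : ∀ b, pr P (fun ω => X ω = b) = 1/2)
    (hstruct : ∀ ω, Y ω = some (X ω) ∨ Y ω = none)
    (hindE : ∀ b, pr P (fun ω => Y ω = none ∧ X ω = b) = p * pr P (fun ω => X ω = b))
    (hc00 : pr P (fun ω => W ω = false ∧ X ω = false ∧ Y ω = some false)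
      = (1 - β) * pr P (fun ω => X ω = false ∧ Y ω = some false))
    (hc11 : pr P (fun ω => W ω = false ∧ X ω = true ∧ Y ω = some true)
      = β * pr P (fun ω => X ω = true ∧ Y ω = some true))
    (hc0E : pr P (fun ω => W ω = false ∧ X ω = false ∧ Y ω = none)
      = (1 - α) * pr P (fun ω => X ω = false ∧ Y ω = none))
    (hc1E : pr P (fun ω => W ω = false ∧ X ω = true ∧ Y ω = none)
      = α * pr P (fun ω => X ω = true ∧ Y ω = none)) :
    mi P (fun ω => (X ω, Y ω)) W = 1 - (1 - p) * binEnt β - p * binEnt α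
    ∧ condEnt P Y W = binEnt p + (1 - p) * binEnt β
    ∧ pr P (fun ω => X ω ≠ W ω) = (1 - p) * β + p * α := by
  have hlaw := pr_eq_erasureLaw_mul_flipChannel hX hstruct hindE hc00 hc11 hc0E hc1E
  have hXY := ent_comp_eq_sum_nlog hlaw Prod.fst
  have hW : ent P W = 1 := by
    simp only [ent, Fintype.sum_bool, pr_eq_half_of_pr_eq_erasureLaw_mul_flipChannel hlaw, nlog_half]
    norm_num
  have hYW := ent_comp_eq_sum_nlog hlaw fun t => (t.1.2, t.2)
  have hXYW := ent_comp_eq_sum_nlog hlaw id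
  have hNe := pr_comp_eq_sum P (fun ω => ((X ω, Y ω), W ω)) fun t => t.1.1 ≠ t.2
  dsimp only [id] at hXY hYW hXYW hNe
  simp only [mi, condEnt, hXY, hW, hYW, hXYW, hNe, hlaw]
  simp only [Fintype.sum_prod_type, Fintype.sum_option, Fintype.sum_bool, erasureLaw, flipChannel,
    Prod.mk.injEq, Option.some.injEq, reduceCtorEq, Bool.false_eq_true, Bool.true_eq_false,
    ne_eq, not_true, not_false_eq_true, and_true, and_false, if_true, if_false, zero_mul,
    add_zero, zero_add, ← mul_add, sub_add_cancel, add_sub_cancel, mul_one, nlog_mul,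
    nlog_div_two, nlog_zero, binEnt]
  refine ⟨by ring, by ring, by ring⟩

/-- Parametric family for regime G₄ (informed encoder): with the conditional
distribution `P(W=0|X=0,Y=0)=1-β`, `P(W=0|X=1,Y=1)=β`, `P(W=0|X=0,Y=E)=1-α`,
`P(W=0|X=1,Y=E)=α`, we get `I(X,Y;W) = 1 - (1-p)h(β) - p h(α)`,
`H(Y|W) = h(p) + (1-p)h(β)`, and `P(X ≠ W) = (1-p)β + pα`. -/
theorem stmt13 {Ω : Type} [Fintype Ω] (P : Ω → ℝ) (hP : IsPMF P)
    (X W : Ω → Bool) (Y : Ω → Option Bool)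
    (p α β : ℝ) (hp : 0 < p) (hp1 : p < 1)
    (hα0 : 0 ≤ α) (hαh : α ≤ 1/2) (hβ0 : 0 ≤ β) (hβh : β ≤ 1/2)
    (hX : ∀ b, pr P (fun ω => X ω = b) = 1/2)
    (hstruct : ∀ ω, Y ω = some (X ω) ∨ Y ω = none)
    (hindE : ∀ b, pr P (fun ω => Y ω = none ∧ X ω = b) = p * pr P (fun ω => X ω = b))
    (hc00 : pr P (fun ω => W ω = false ∧ X ω = false ∧ Y ω = some false)
      = (1 - β) * pr P (fun ω => X ω = false ∧ Y ω = some false))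
    (hc11 : pr P (fun ω => W ω = false ∧ X ω = true ∧ Y ω = some true)
      = β * pr P (fun ω => X ω = true ∧ Y ω = some true))
    (hc0E : pr P (fun ω => W ω = false ∧ X ω = false ∧ Y ω = none)
      = (1 - α) * pr P (fun ω => X ω = false ∧ Y ω = none))
    (hc1E : pr P (fun ω => W ω = false ∧ X ω = true ∧ Y ω = none)
      = α * pr P (fun ω => X ω = true ∧ Y ω = none)) :
    mi P (fun ω => (X ω, Y ω)) W = 1 - (1 - p) * binEnt β - p * binEnt α
    ∧ condEnt P Y W = binEnt p + (1 - p) * binEnt β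
    ∧ pr P (fun ω => X ω ≠ W ω) = (1 - p) * β + p * α :=
  stmt13_general P X W Y p α β hX hstruct hindE hc00 hc11 hc0E hc1E
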